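/- Let L=(P_1,…,P_k) be a minimum linkage for a problem instance (G,s_1,t_1,…,s_k,t_k), let C be a clique of G, let B⊆C be C-acceptable for L, and set A=C∖B. Let i∈{1,…,k} and suppose P_i has a vertex in A∖{t_i}; let r_i be the first such vertex along P_i and let q_i be the vertex immediately preceding r_i on P_i. Then: the only edge of G from V(P_i)∩B to V(P_i)∩A (if there is one) is q_i r_i; every three-vertex directed path of G from V(P_i)∩B to V(P_i)∩A whose internal vertex lies in V(G)∖V(L) uses at least one of q_i, r_i; and there is no planar (P_i,P_i)-matching from B to A of cardinality three internally disjoint from L. -/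

import Mathlib

open scoped Classical

noncomputable section

/-- A digraph: loopless, no parallel edges (an adjacency relation);
for distinct `u v` both `adj u v` and `adj v u` may hold. -/
structure Dgraph (V : Type) where
  adj : V → V → Prop
  irrefl : ∀ v, ¬ adj v v

/-- A directed path in a digraph `G`, given by its (nonempty, duplicate-free) list of
vertices, consecutive vertices being adjacent. -/
structure Dpath {V : Type} (G : Dgraph V) where
  verts : List V
  ne : verts ≠ []
  nodup : verts.Nodup
  chain : verts.Chain' G.adj

namespace Dpath

variable {V : Type} {G : Dgraph V}

/-- `s(P)`, the first vertex of a path. -/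
def first (P : Dpath G) : V := P.verts.head P.ne

/-- `t(P)`, the last vertex of a path. -/
def last (P : Dpath G) : V := P.verts.getLast P.ne

/-- `V(P)`, the set of vertices of a path. -/
def support (P : Dpath G) : Set V := {v | v ∈ P.verts}

/-- The length of a path: its number of edges. -/
def length (P : Dpath G) : ℕ := P.verts.length - 1

/-- `Q` is a subpath of `P`. -/
def IsSubpath (Q P : Dpath G) : Prop := Q.verts <:+: P.verts

/-- `Q` is an initial subpath of `P` (a subpath with `s(Q) = s(P)`). -/
def IsInitialSubpath (Q P : Dpath G) : Prop := Q.verts <+: P.verts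

/-- The (directed) edges of a path, as ordered pairs of consecutive vertices. -/
def edges (P : Dpath G) : List (V × V) := P.verts.zip P.verts.tail

end Dpath

variable {V : Type}

/-- A family of paths is a linkage when its members are pairwise vertex-disjoint. -/
def IsLinkage {G : Dgraph V} {k : ℕ} (L : Fin k → Dpath G) : Prop :=
  ∀ i j, i ≠ j → Disjoint (L i).support (L j).support

/-- `V(L)`, the union of the vertex sets of the members of a linkage. -/
def linkSupport {G : Dgraph V} {k : ℕ} (L : Fin k → Dpath G) : Set V :=
  ⋃ i, (L i).support

/-- `(G, s 1, t 1, …, s k, t k)` is a problem instance: the `2k` vertices are distinct. -/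
def IsInstance {k : ℕ} (sv tv : Fin k → V) : Prop :=
  Function.Injective sv ∧ Function.Injective tv ∧ ∀ i j, sv i ≠ tv j

/-- `L` is a linkage for the problem instance: its `i`-th member runs from `s i` to `t i`. -/
def IsLinkageFor {G : Dgraph V} {k : ℕ} (L : Fin k → Dpath G) (sv tv : Fin k → V) : Prop :=
  IsLinkage L ∧ ∀ i, (L i).first = sv i ∧ (L i).last = tv i

/-- A linkage is minimum if no linkage joining the same pairs of ends uses fewer vertices. -/
def IsMinimumLinkage {G : Dgraph V} {k : ℕ} (L : Fin k → Dpath G) : Prop :=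
  IsLinkage L ∧ ∀ L' : Fin k → Dpath G, IsLinkage L' →
    (∀ i, (L' i).first = (L i).first ∧ (L' i).last = (L i).last) →
    (linkSupport L).ncard ≤ (linkSupport L').ncard

/-- A minimum linkage for a problem instance. -/
def IsMinimumLinkageFor {G : Dgraph V} {k : ℕ} (L : Fin k → Dpath G)
    (sv tv : Fin k → V) : Prop :=
  IsLinkageFor L sv tv ∧ IsMinimumLinkage L

/-- `C ⊆ V(G)` is a clique if `G[C]` is semicomplete. -/
def Dgraph.IsClique (G : Dgraph V) (C : Set V) : Prop :=
  ∀ u ∈ C, ∀ v ∈ C, u ≠ v → (G.adj u v ∨ G.adj v u)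

/-- `(C 1, …, C c)` is a clique-partition of `G`: a partition of `V(G)` into
(possibly empty) cliques. -/
def Dgraph.IsCliquePartition (G : Dgraph V) {c : ℕ} (C : Fin c → Set V) : Prop :=
  (∀ a, G.IsClique (C a)) ∧ ∀ v : V, ∃! a, v ∈ C a

/-- The internal vertices of a linkage: vertices of `V(L)` not an end of any member. -/
def internalVerts {G : Dgraph V} {k : ℕ} (L : Fin k → Dpath G) : Set V :=
  linkSupport L \ ((Set.range fun i => (L i).first) ∪ (Set.range fun i => (L i).last))

/-- `M` is internally disjoint from `L`: no internal vertex of `M` belongs to `V(L)`. -/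
def InternallyDisjointFrom {G : Dgraph V} {m k : ℕ} (M : Fin m → Dpath G)
    (L : Fin k → Dpath G) : Prop :=
  ∀ v ∈ internalVerts M, v ∉ linkSupport L

/-- A planar `(Q,R)`-matching of cardinality `n`: a linkage of `n` paths, each with at most
three vertices, whose first vertices lie on `Q` in order and last vertices lie on `R` in
order. -/
def IsPlanarMatching {G : Dgraph V} {n : ℕ} (Q R : Dpath G) (M : Fin n → Dpath G) : Prop :=
  IsLinkage M ∧ (∀ j, (M j).verts.length ≤ 3) ∧
  (List.ofFn fun j => (M j).first).Sublist Q.verts ∧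
  (List.ofFn fun j => (M j).last).Sublist R.verts

/-- A planar `(Q,R)`-matching from `X` to `Y`. -/
def IsPlanarMatchingFromTo {G : Dgraph V} {n : ℕ} (Q R : Dpath G) (M : Fin n → Dpath G)
    (X Y : Set V) : Prop :=
  IsPlanarMatching Q R M ∧ ∀ j, (M j).first ∈ X ∧ (M j).last ∈ Y

/-- `B ⊆ C` is `C`-acceptable for the linkage `L` (for the instance given by `sv, tv`). -/
def CAcceptable {G : Dgraph V} {k : ℕ} (sv tv : Fin k → V) (L : Fin k → Dpath G)
    (C B : Set V) : Prop :=
  B ⊆ C ∧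
  Set.range sv ∩ C ⊆ B ∧
  Set.range tv ∩ B = ∅ ∧
  (∀ i, ∃ Q : Dpath G, Q.IsInitialSubpath (L i) ∧ Q.support ∩ C = (L i).support ∩ B) ∧
  ∀ i j : Fin k, ¬ ∃ M : Fin (k ^ 2 + k + 2) → Dpath G,
      IsPlanarMatchingFromTo (L i) (L j) M B (C \ B) ∧ InternallyDisjointFrom M L

/-- A list of vertices is `(X,Y)`-alternating: entries with even position (0-based) are
in `X`, those with odd position in `Y`. -/
def Alternating (X Y : Set V) (l : List V) : Prop :=
  ∀ (i : ℕ) (h : i < l.length),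
    if i % 2 = 0 then l.get ⟨i, h⟩ ∈ X else l.get ⟨i, h⟩ ∈ Y

/-- `P` contains an `(X,Y)`-alternating sequence (of distinct vertices, in order in `P`)
of length `2 * m`. -/
def HasAlt {G : Dgraph V} (P : Dpath G) (X Y : Set V) (m : ℕ) : Prop :=
  ∃ l : List V, l.Sublist P.verts ∧ l.length = 2 * m ∧ Alternating X Y l

/-- The `(X,Y)`-wiggle number of `P`: half the length of the longest `(X,Y)`-alternating
sequence of vertices in order in `P`. -/
def wiggle {G : Dgraph V} (P : Dpath G) (X Y : Set V) : ℕ :=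
  sSup {m | HasAlt P X Y m}

/-- `zOf k c = c(c(k²+k+1)+k+2)`. -/
def zOf (k c : ℕ) : ℕ := c * (c * (k ^ 2 + k + 1) + k + 2)

/-- `wOf k c = c(c−1)(z+1)+1`. -/
def wOf (k c : ℕ) : ℕ := c * (c - 1) * (zOf k c + 1) + 1

/-- `rOf k c = ckw`. -/
def rOf (k c : ℕ) : ℕ := c * k * wOf k c

/-- `sOf k = k²+k+3`. -/
def sOf (k : ℕ) : ℕ := k ^ 2 + k + 3

/-- `tOf k c = 2cskw + c(2w+1)k²(k²+k+1)`. -/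
def tOf (k c : ℕ) : ℕ :=
  2 * c * sOf k * k * wOf k c + c * (2 * wOf k c + 1) * k ^ 2 * (k ^ 2 + k + 1)

/-- Given a clique-partition `C` and a linkage `L` for the instance, `B` is acceptable
(with `A = V(G) ∖ B`). -/
def Acceptable {G : Dgraph V} {k c : ℕ} (sv tv : Fin k → V) (L : Fin k → Dpath G)
    (C : Fin c → Set V) (z : ℕ) (B : Set V) : Prop :=
  (∀ i, sv i ∈ B) ∧ (∀ i, tv i ∉ B) ∧
  (∀ a, CAcceptable sv tv L (C a) (B ∩ C a)) ∧
  ∀ a b, a ≠ b → ∀ i, wiggle (L i) (B ∩ C b) (Bᶜ ∩ C a) ≤ z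

/-- The vertices of `l` belonging to `C`, in order. -/
def inOrderIn (l : List V) (C : Set V) : List V := l.filter fun v => decide (v ∈ C)

/-- The last `m` (or "up to `m`") vertices of the path `P` in `C`, in order along `P`. -/
def lastIn {G : Dgraph V} (P : Dpath G) (C : Set V) (m : ℕ) : List V :=
  (inOrderIn P.verts C).drop ((inOrderIn P.verts C).length - m)

/-- The first up-to-`m` vertices of the path `P` in `C`, in order along `P`. -/
def firstUpTo {G : Dgraph V} (P : Dpath G) (C : Set V) (m : ℕ) : List V :=
  (inOrderIn P.verts C).take m

/-- The set of terms of a vertex sequence. -/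
def seqSet (X : List V) : Set V := {v | v ∈ X}

/-- `𝒜⁺` for a set `𝒜` of vertex sequences. -/
def plusSet (G : Dgraph V) {c : ℕ} (C : Fin c → Set V) (s : ℕ) (𝒜 : Set (List V)) : Set V :=
  {v | ∃ X ∈ 𝒜, ∃ a, insert v (seqSet X) ⊆ C a ∧
    (v ∈ X ∨ (v ∉ X ∧ X.length = s ∧ ∀ u ∈ X.drop (X.length - (s - 1)), G.adj u v))}

/-- `𝒜⁻` for a set `𝒜` of vertex sequences. -/
def minusSet (G : Dgraph V) {c : ℕ} (C : Fin c → Set V) (s : ℕ) (𝒜 : Set (List V)) : Set V :=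
  {v | ∃ X ∈ 𝒜, ∃ a, insert v (seqSet X) ⊆ C a ∧
    (v ∈ X ∨ (v ∉ X ∧ X.length = s ∧ ∀ u ∈ X.take (s - 1), G.adj v u))}

/-- A set `D ⊆ V(G)` is `(r,s,t)`-restricted. -/
def Restricted (G : Dgraph V) {c : ℕ} (C : Fin c → Set V) (r s t : ℕ) (D : Set V) : Prop :=
  ∃ 𝒜 ℬ : Set (List V),
    (∀ X ∈ 𝒜, X.length ≤ s) ∧ (∀ X ∈ ℬ, X.length ≤ s) ∧
    𝒜.ncard ≤ r ∧ ℬ.ncard ≤ r ∧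
    (plusSet G C s ℬ ∩ minusSet G C s 𝒜).ncard ≤ t ∧
    plusSet G C s ℬ \ minusSet G C s 𝒜 ⊆ D ∧
    D ⊆ plusSet G C s ℬ

/-- `e` is an enumeration of `V(L) ∖ {s 1,…,s k,t 1,…,t k}`. -/
def IsEnumeration {G : Dgraph V} {k : ℕ} (L : Fin k → Dpath G) (sv tv : Fin k → V)
    (e : List V) : Prop :=
  e.Nodup ∧ {v | v ∈ e} = linkSupport L \ (Set.range sv ∪ Set.range tv)

/-- `B h = {s 1,…,s k} ∪ {v 1,…,v h}`, for the enumeration `e`. -/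
def BsetOf {k : ℕ} (sv : Fin k → V) (e : List V) (h : ℕ) : Set V :=
  Set.range sv ∪ {v | v ∈ e.take h}

/-- `A h = V(L) ∖ B h`. -/
def AsetOf {G : Dgraph V} {k : ℕ} (L : Fin k → Dpath G) (sv : Fin k → V) (e : List V)
    (h : ℕ) : Set V :=
  linkSupport L \ BsetOf sv e h

/-- The maximal subpaths of members of `L` with all vertices in `S`: the components,
included in `S`, of the digraph obtained from `P 1 ∪ ⋯ ∪ P k` by deleting the edges with
exactly one end in `S`. -/
def segsIn {G : Dgraph V} {k : ℕ} (L : Fin k → Dpath G) (S : Set V) : Set (Dpath G) :=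
  {Q | ∃ i, Q.IsSubpath (L i) ∧ Q.support ⊆ S ∧
    ∀ Q' : Dpath G, Q'.IsSubpath (L i) → Q'.support ⊆ S → Q.IsSubpath Q' →
      Q'.verts = Q.verts}

/-- `𝒜 h`: first up-to-`s` vertices in each `C a` of each path of `ℛ h`. -/
def AseqsOf (G : Dgraph V) {k c : ℕ} (C : Fin c → Set V) (s : ℕ) (L : Fin k → Dpath G)
    (sv : Fin k → V) (e : List V) (h : ℕ) : Set (List V) :=
  {X | ∃ R ∈ segsIn L (AsetOf L sv e h), ∃ a, X = firstUpTo R (C a) s}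

/-- `ℬ h`: last up-to-`s` vertices in each `C a` of each path of `𝒬 h`. -/
def BseqsOf (G : Dgraph V) {k c : ℕ} (C : Fin c → Set V) (s : ℕ) (L : Fin k → Dpath G)
    (sv : Fin k → V) (e : List V) (h : ℕ) : Set (List V) :=
  {X | ∃ Q ∈ segsIn L (BsetOf sv e h), ∃ a, X = lastIn Q (C a) s}

/-- `D h = (ℬ h⁺ ∖ 𝒜 h⁻) ∪ B h`. -/
def DsetOf (G : Dgraph V) {k c : ℕ} (C : Fin c → Set V) (s : ℕ) (L : Fin k → Dpath G)
    (sv : Fin k → V) (e : List V) (h : ℕ) : Set V :=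
  (plusSet G C s (BseqsOf G C s L sv e h) \ minusSet G C s (AseqsOf G C s L sv e h))
    ∪ BsetOf sv e h

/-- The edges of the members of a linkage. -/
def linkEdges {G : Dgraph V} {k : ℕ} (L : Fin k → Dpath G) : Set (V × V) :=
  ⋃ i, {p | p ∈ (L i).edges}

/-- `J h`: the edges of `P 1 ∪ ⋯ ∪ P k` with one end in `A h` and the other in `B h`. -/
def JsetOf {G : Dgraph V} {k : ℕ} (L : Fin k → Dpath G) (sv : Fin k → V) (e : List V)
    (h : ℕ) : Set (V × V) :=
  {p ∈ linkEdges L |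
    (p.1 ∈ AsetOf L sv e h ∧ p.2 ∈ BsetOf sv e h) ∨
    (p.1 ∈ BsetOf sv e h ∧ p.2 ∈ AsetOf L sv e h)}

/-- `Y h = {(e,i) : e ∈ J h ∩ E(P i)}`, as a set of coloured edges. -/
def YsetOf {G : Dgraph V} {k : ℕ} (L : Fin k → Dpath G) (sv : Fin k → V) (e : List V)
    (h : ℕ) : Set ((V × V) × Fin k) :=
  {p | p.1 ∈ JsetOf L sv e h ∧ p.1 ∈ (L p.2).edges}

/-- `ℰ`: the admissible sets of coloured edges (a coloured edge is a pair `(e,i)` with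
`e ∈ E(G)` and `i` a colour in `Fin k`; its tail is `e.1` and its head is `e.2`). -/
def EdgeSets (G : Dgraph V) {k : ℕ} (sv tv : Fin k → V) (w : ℕ) :
    Set (Set ((V × V) × Fin k)) :=
  {Y | (∀ p ∈ Y, G.adj p.1.1 p.1.2) ∧
    Y.ncard ≤ 2 * w - 1 ∧
    (∀ p ∈ Y, ∀ q ∈ Y, p ≠ q → p.1.2 ≠ q.1.2 ∧ p.1.1 ≠ q.1.1) ∧
    (∀ p ∈ Y, ∀ q ∈ Y, ({p.1.1, p.1.2} ∩ {q.1.1, q.1.2} : Set V).Nonempty → p.2 = q.2) ∧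
    (∀ p ∈ Y, p.1.2 ∉ Set.range sv ∧ p.1.1 ∉ Set.range tv) ∧
    (∀ p ∈ Y, ∀ i, (p.1.1 = sv i → p.2 = i) ∧ (p.1.2 = tv i → p.2 = i))}

/-- The vertices of the auxiliary digraph `H`: pairs `(Y,D)` with `Y ∈ ℰ`, `D ∈ 𝒟`
(i.e. `D` is `(r,s,t)`-restricted), such that every coloured edge of `Y` has exactly one
end in `D`. -/
def HVert (G : Dgraph V) {k c : ℕ} (sv tv : Fin k → V) (C : Fin c → Set V)
    (w r s t : ℕ) (x : Set ((V × V) × Fin k) × Set V) : Prop :=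
  x.1 ∈ EdgeSets G sv tv w ∧ Restricted G C r s t x.2 ∧
  ∀ p ∈ x.1, Xor' (p.1.1 ∈ x.2) (p.1.2 ∈ x.2)

/-- Adjacency in the auxiliary digraph `H`. -/
def HAdj (G : Dgraph V) {k c : ℕ} (sv tv : Fin k → V) (C : Fin c → Set V)
    (w r s t : ℕ) (x y : Set ((V × V) × Fin k) × Set V) : Prop :=
  x ≠ y ∧ HVert G sv tv C w r s t x ∧ HVert G sv tv C w r s t y ∧ x.2 ⊆ y.2 ∧
  ∃ p q : (V × V) × Fin k, p ≠ q ∧ symmDiff x.1 y.1 = {p, q} ∧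
    p.1.2 = q.1.1 ∧ p.1.1 ≠ q.1.2 ∧ p.1.2 ∈ y.2 \ x.2

/-- The auxiliary digraph `H`. -/
def auxH (G : Dgraph V) {k c : ℕ} (sv tv : Fin k → V) (C : Fin c → Set V)
    (w r s t : ℕ) : Dgraph (Set ((V × V) × Fin k) × Set V) :=
  ⟨HAdj G sv tv C w r s t, fun _ hx => hx.1 rfl⟩

/-- `S 0`: the vertices `(Y,D)` of `H` with `|Y| = k` and every member of `Y` having tail
in `{s 1,…,s k}`. -/
def S0set (G : Dgraph V) {k c : ℕ} (sv tv : Fin k → V) (C : Fin c → Set V)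
    (w r s t : ℕ) : Set (Set ((V × V) × Fin k) × Set V) :=
  {x | HVert G sv tv C w r s t x ∧ x.1.ncard = k ∧ ∀ p ∈ x.1, p.1.1 ∈ Set.range sv}

/-- `T 0`: the vertices `(Y,D)` of `H` with `|Y| = k` and every member of `Y` having head
in `{t 1,…,t k}`. -/
def T0set (G : Dgraph V) {k c : ℕ} (sv tv : Fin k → V) (C : Fin c → Set V)
    (w r s t : ℕ) : Set (Set ((V × V) × Fin k) × Set V) :=
  {x | HVert G sv tv C w r s t x ∧ x.1.ncard = k ∧ ∀ p ∈ x.1, p.1.2 ∈ Set.range tv}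

end

/-! Replacing the segment of `P i` strictly between positions `a < b` by a path `mid` avoiding
`V(L)` yields a linkage with the same ends, so minimality forces `b ≤ a + 1 + |mid|`.
Acceptability puts the vertices of `P i` in `B` before position `m` (that of `r`) and those in `A`
at or after it; hence an edge from `B` to `A` between vertices of `P i` is `q r`, and a two-edge
path through `V(G) ∖ V(L)` starts at `q` or ends at `r`. Every member of a planar matching from
`B` to `A` internally disjoint from `L` is such an edge or path, so three disjoint members cannot
all meet `{q, r}`. -/

namespace List

variable {α : Type*}

theorem IsPrefix.lt_of_getElem_mem_of_getElem_not_mem {q l : List α}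
    (hq : q <+: l) (hl : l.Nodup) {a b : ℕ} (ha : a < l.length) (hb : b < l.length)
    (haq : l[a] ∈ q) (hbq : l[b] ∉ q) : a < b := by
  rw [hq.mem_iff_idxOf_lt_length, hl.idxOf_getElem] at haq hbq
  omega

theorem Nodup.take_append_append_drop {l mid : List α} (hl : l.Nodup) (hmid : mid.Nodup)
    (hdisj : ∀ x ∈ mid, x ∉ l) {a b : ℕ} (hab : a < b) :
    (l.take (a + 1) ++ mid ++ l.drop b).Nodup := by
  have hout : (l.take (a + 1) ++ l.drop b).Nodup :=
    ((take_sublist_take_left hab).append (Sublist.refl _)).nodup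
      ((take_append_drop b l).symm ▸ hl)
  have hperm : l.take (a + 1) ++ mid ++ l.drop b ~ mid ++ (l.take (a + 1) ++ l.drop b) := by
    simpa only [append_assoc] using perm_append_comm.append_right (l.drop b)
  refine hperm.nodup_iff.mpr (nodup_append.mpr ⟨hmid, hout, fun x hx y hy hxy => ?_⟩)
  subst hxy
  exact hdisj x hx ((mem_append.mp hy).elim (take_subset _ _ ·) (drop_subset _ _ ·))

theorem IsChain.take_append_append_drop {R : α → α → Prop} {l mid : List α}
    (hl : l.IsChain R) {a b : ℕ} (ha : a < l.length) (hb : b < l.length)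
    (hmid : (l[a] :: (mid ++ [l[b]])).IsChain R) :
    (l.take (a + 1) ++ mid ++ l.drop b).IsChain R := by
  have hfront : (l.take a ++ [l[a]] ++ (mid ++ [l[b]])).IsChain R :=
    IsChain.append_overlap (by simpa using hl.take (a + 1)) hmid (cons_ne_nil _ _)
  have hback : ([l[b]] ++ l.drop (b + 1)).IsChain R := by
    simpa only [singleton_append, ← drop_eq_getElem_cons hb] using hl.drop b
  have := IsChain.append_overlap (l₁ := l.take a ++ [l[a]] ++ mid) (by simpa using hfront) hback
    (cons_ne_nil _ _)
  rw [drop_eq_getElem_cons hb, ← take_append_getElem ha]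
  simpa only [append_assoc, singleton_append] using this

end List

namespace Dpath

variable {V : Type} {G : Dgraph V}

theorem first_mem (P : Dpath G) : P.first ∈ P.support := List.head_mem P.ne

theorem last_mem (P : Dpath G) : P.last ∈ P.support := List.getLast_mem P.ne

theorem ncard_support (P : Dpath G) : P.support.ncard = P.verts.length := by
  rw [support, ← List.coe_toFinset, Set.ncard_coe_finset, List.toFinset_card_of_nodup P.nodup]

theorem verts_eq_of_length_le_three (P : Dpath G) (h3 : P.verts.length ≤ 3)
    (hne : P.first ≠ P.last) :
    P.verts = [P.first, P.last] ∨ ∃ w, P.verts = [P.first, w, P.last] := by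
  revert h3 hne
  rcases P with ⟨_ | ⟨u, _ | ⟨w, _ | ⟨x, _ | ⟨y, l⟩⟩⟩⟩, hP, -, -⟩ <;>
    simp [first, last] at hP ⊢

def reroute (P : Dpath G) {a b : ℕ} (hab : a < b) (hb : b < P.verts.length) (mid : List V)
    (hmid : mid.Nodup) (hdisj : ∀ x ∈ mid, x ∉ P.verts)
    (hchain : (P.verts[a] :: (mid ++ [P.verts[b]])).IsChain G.adj) : Dpath G where
  verts := P.verts.take (a + 1) ++ mid ++ P.verts.drop b
  ne := by simp [hb]
  nodup := P.nodup.take_append_append_drop hmid hdisj hab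
  chain := P.chain.take_append_append_drop (by omega) hb hchain

variable (P : Dpath G) {a b : ℕ} (hab : a < b) (hb : b < P.verts.length) (mid : List V)
  (hmid : mid.Nodup) (hdisj : ∀ x ∈ mid, x ∉ P.verts)
  (hchain : (P.verts[a] :: (mid ++ [P.verts[b]])).IsChain G.adj)

theorem reroute_first : (P.reroute hab hb mid hmid hdisj hchain).first = P.first := by
  have htake : P.verts.take (a + 1) ≠ [] := by simp [P.ne]
  simp only [reroute, first, List.append_assoc, List.head_append_of_ne_nil htake, List.head_take]

theorem reroute_last : (P.reroute hab hb mid hmid hdisj hchain).last = P.last := by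
  have hdrop : P.verts.drop b ≠ [] := by simp [hb]
  simp only [reroute, last, List.getLast_append_of_ne_nil _ hdrop, List.getLast_drop]

theorem support_reroute_subset :
    (P.reroute hab hb mid hmid hdisj hchain).support ⊆ P.support ∪ {x | x ∈ mid} := by
  intro x hx
  simp only [reroute, support, Set.mem_ofPred_eq, List.mem_append] at hx
  rcases hx with (hx | hx) | hx
  exacts [Or.inl (List.take_subset _ _ hx), Or.inr hx, Or.inl (List.drop_subset _ _ hx)]

theorem length_reroute : (P.reroute hab hb mid hmid hdisj hchain).verts.length =
    a + 1 + mid.length + (P.verts.length - b) := by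
  simp only [reroute, List.length_append, List.length_take, List.length_drop]
  omega

end Dpath

section Linkage

variable {V : Type} {G : Dgraph V} {k : ℕ}

theorem subset_linkSupport (L : Fin k → Dpath G) (i : Fin k) : (L i).support ⊆ linkSupport L :=
  Set.subset_iUnion (fun j => (L j).support) i

theorem linkSupport_eq_union (L : Fin k → Dpath G) (i : Fin k) :
    linkSupport L = (⋃ j ∈ ({i}ᶜ : Set (Fin k)), (L j).support) ∪ (L i).support := by
  ext x
  simp only [linkSupport, Set.mem_iUnion, Set.mem_union, Set.mem_compl_singleton_iff]
  constructor
  · rintro ⟨j, hj⟩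
    by_cases h : j = i
    exacts [Or.inr (h ▸ hj), Or.inl ⟨j, h, hj⟩]
  · rintro (⟨j, -, hj⟩ | hi)
    exacts [⟨j, hj⟩, ⟨i, hi⟩]

theorem linkSupport_update (L : Fin k → Dpath G) (i : Fin k) (P : Dpath G) :
    linkSupport (Function.update L i P) =
      (⋃ j ∈ ({i}ᶜ : Set (Fin k)), (L j).support) ∪ P.support := by
  rw [linkSupport_eq_union _ i, Function.update_self]
  refine congrArg (· ∪ P.support) (Set.iUnion₂_congr fun j hj => ?_)
  rw [Function.update_of_ne hj]

theorem IsLinkage.update {L : Fin k → Dpath G} (hL : IsLinkage L) {i : Fin k} {P : Dpath G}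
    (hP : ∀ j ≠ i, Disjoint P.support (L j).support) : IsLinkage (Function.update L i P) := by
  intro j j' hjj'
  by_cases hj : j = i <;> by_cases hj' : j' = i
  · exact absurd (hj.trans hj'.symm) hjj'
  · simpa [hj, Function.update_of_ne hj'] using hP j' hj'
  · simpa [hj', Function.update_of_ne hj] using (hP j hj).symm
  · simpa [Function.update_of_ne hj, Function.update_of_ne hj'] using hL j j' hjj'

theorem IsMinimumLinkage.length_le {L : Fin k → Dpath G} (hL : IsMinimumLinkage L)
    (i : Fin k) (P : Dpath G) (hfirst : P.first = (L i).first) (hlast : P.last = (L i).last)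
    (hP : ∀ j ≠ i, Disjoint P.support (L j).support) :
    (L i).verts.length ≤ P.verts.length := by
  have hmin := hL.2 _ (hL.1.update hP) fun j => by
    rcases eq_or_ne j i with rfl | hj
    · simpa using ⟨hfirst, hlast⟩
    · simp [Function.update_of_ne hj]
  rw [linkSupport_eq_union L i, linkSupport_update] at hmin
  set others := ⋃ j ∈ ({i}ᶜ : Set (Fin k)), (L j).support
  have hothers : Disjoint others (L i).support :=
    Set.disjoint_iUnion₂_left.mpr fun j hj => hL.1 j i hj
  have hfin : others.Finite := Set.toFinite _ |>.biUnion fun j _ => (L j).verts.finite_toSet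
  rw [Set.ncard_union_eq hothers hfin (L i).verts.finite_toSet] at hmin
  have := Set.ncard_union_le others P.support
  rw [Dpath.ncard_support] at hmin this
  omega

theorem IsLinkage.mem_internalVerts {n : ℕ} {M : Fin n → Dpath G} (hM : IsLinkage M)
    {j : Fin n} {w : V} (hw : w ∈ (M j).support) (hfirst : w ≠ (M j).first)
    (hlast : w ≠ (M j).last) : w ∈ internalVerts M := by
  refine ⟨subset_linkSupport M j hw, ?_⟩
  rintro (⟨j', rfl⟩ | ⟨j', rfl⟩) <;> rcases eq_or_ne j' j with rfl | hj'
  · exact hfirst rfl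
  · exact Set.disjoint_left.mp (hM j' j hj') (M j').first_mem hw
  · exact hlast rfl
  · exact Set.disjoint_left.mp (hM j' j hj') (M j').last_mem hw

theorem IsLinkage.card_le_of_forall_meets {n : ℕ} {M : Fin n → Dpath G} (hM : IsLinkage M)
    (S : Finset V) (hS : ∀ j, ∃ v ∈ S, v ∈ (M j).support) : n ≤ S.card := by
  choose f hfS hfM using hS
  have hinj : Function.Injective f := fun j j' hjj' => by
    by_contra hne
    exact Set.disjoint_left.mp (hM j j' hne) (hfM j) (hjj' ▸ hfM j')
  simpa using Finset.card_le_card_of_injOn (s := Finset.univ) f (fun j _ => hfS j) hinj.injOn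

theorem IsMinimumLinkage.le_of_detour {L : Fin k → Dpath G} (hL : IsMinimumLinkage L)
    (i : Fin k) {a b : ℕ} (hab : a < b) (hb : b < (L i).verts.length) {mid : List V}
    (hmid : mid.Nodup) (havoid : ∀ x ∈ mid, x ∉ linkSupport L)
    (hchain : ((L i).verts[a] :: (mid ++ [(L i).verts[b]])).IsChain G.adj) :
    b ≤ a + 1 + mid.length := by
  have hdisj : ∀ x ∈ mid, x ∉ (L i).verts := fun x hx h =>
    havoid x hx (subset_linkSupport L i h)
  have hle := hL.length_le i ((L i).reroute hab hb mid hmid hdisj hchain)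
    (Dpath.reroute_first ..) (Dpath.reroute_last ..) fun j hj =>
      Set.disjoint_of_subset_left (Dpath.support_reroute_subset ..) <|
        Set.disjoint_union_left.mpr ⟨hL.1 i j hj.symm, Set.disjoint_left.mpr fun x hx hxj =>
          havoid x hx (subset_linkSupport L j hxj)⟩
  rw [Dpath.length_reroute] at hle
  omega

end Linkage

section Crossing

variable {V : Type} {G : Dgraph V}

def Dpath.CrossesAt (P : Dpath G) (X Y : Set V) (m : ℕ) : Prop :=
  (∀ a (ha : a < P.verts.length), P.verts[a] ∈ X → a < m) ∧
    ∀ b (hb : b < P.verts.length), P.verts[b] ∈ Y → m ≤ b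

variable {k : ℕ} {L : Fin k → Dpath G} {i : Fin k} {X Y : Set V} {m : ℕ}

theorem CAcceptable.crossesAt {sv tv : Fin k → V} {C B : Set V}
    (hacc : CAcceptable sv tv L C B) (hm : m < (L i).verts.length) (hmA : (L i).verts[m] ∈ C \ B)
    (hfirst : ∀ j (hj : j < (L i).verts.length), j < m →
      (L i).verts[j] ∉ (C \ B) \ {(L i).last}) :
    (L i).CrossesAt B (C \ B) m := by
  refine ⟨fun a ha haB => ?_, fun b hb hbA => ?_⟩
  · obtain ⟨Q, hQ, hQC⟩ := hacc.2.2.2.1 i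
    have haQ : (L i).verts[a] ∈ Q.verts :=
      (hQC ▸ ⟨List.getElem_mem ha, haB⟩ : _ ∈ Q.support ∩ C).1
    have hmQ : (L i).verts[m] ∉ Q.verts := fun h =>
      hmA.2 (hQC ▸ ⟨h, hmA.1⟩ : _ ∈ (L i).support ∩ B).2
    exact hQ.lt_of_getElem_mem_of_getElem_not_mem (L i).nodup ha hm haQ hmQ
  · by_contra! hbm
    have hlast : (L i).verts[b] = (L i).last := by
      by_contra h
      exact hfirst b hb hbm ⟨hbA, h⟩
    rw [Dpath.last, List.getLast_eq_getElem, (L i).nodup.getElem_inj_iff] at hlast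
    omega

theorem IsMinimumLinkage.eq_of_adj_of_crossesAt (hL : IsMinimumLinkage L)
    (hm : m < (L i).verts.length) (hcross : (L i).CrossesAt X Y m) :
    ∀ u ∈ (L i).support ∩ X, ∀ x ∈ (L i).support ∩ Y, G.adj u x →
      u = (L i).verts[m - 1] ∧ x = (L i).verts[m] := by
  rintro u ⟨hu, huX⟩ x ⟨hx, hxY⟩ hux
  obtain ⟨a, ha, rfl⟩ := List.getElem_of_mem hu
  obtain ⟨b, hb, rfl⟩ := List.getElem_of_mem hx
  have ham := hcross.1 a ha huX
  have hmb := hcross.2 b hb hxY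
  have := hL.le_of_detour i (a := a) (by omega) hb List.nodup_nil (by simp) (by simpa using hux)
  simp only [List.length_nil] at this
  obtain rfl : a = m - 1 := by omega
  obtain rfl : b = m := by omega
  exact ⟨rfl, rfl⟩

theorem IsMinimumLinkage.mem_of_adj_adj_of_crossesAt (hL : IsMinimumLinkage L)
    (hm : m < (L i).verts.length) (hcross : (L i).CrossesAt X Y m) :
    ∀ u w x : V, u ∈ (L i).support ∩ X → x ∈ (L i).support ∩ Y →
      w ∉ linkSupport L → G.adj u w → G.adj w x →
      (L i).verts[m - 1] ∈ ({u, w, x} : Set V) ∨ (L i).verts[m] ∈ ({u, w, x} : Set V) := by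
  rintro u w x ⟨hu, huX⟩ ⟨hx, hxY⟩ hw huw hwx
  obtain ⟨a, ha, rfl⟩ := List.getElem_of_mem hu
  obtain ⟨b, hb, rfl⟩ := List.getElem_of_mem hx
  have ham := hcross.1 a ha huX
  have hmb := hcross.2 b hb hxY
  have := hL.le_of_detour i (a := a) (by omega) hb (List.nodup_singleton w) (by simpa using hw)
    (by simpa using ⟨huw, hwx⟩)
  simp only [List.length_singleton] at this
  rcases eq_or_ne a (m - 1) with rfl | ham'
  · exact Or.inl (Set.mem_insert _ _)
  · obtain rfl : b = m := by omega
    exact Or.inr (by simp)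

end Crossing

theorem IsPlanarMatchingFromTo.card_le_two {V : Type} {G : Dgraph V} {k n : ℕ} {Q R : Dpath G}
    {M : Fin n → Dpath G} {X Y : Set V} {L : Fin k → Dpath G}
    (hM : IsPlanarMatchingFromTo Q R M X Y) (hML : InternallyDisjointFrom M L)
    (hXY : Disjoint X Y) {q r : V}
    (hedge : ∀ u ∈ Q.support ∩ X, ∀ x ∈ R.support ∩ Y, G.adj u x →
      q ∈ ({u, x} : Set V) ∨ r ∈ ({u, x} : Set V))
    (hpath : ∀ u w x : V, u ∈ Q.support ∩ X → x ∈ R.support ∩ Y →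
      w ∉ linkSupport L → G.adj u w → G.adj w x →
      q ∈ ({u, w, x} : Set V) ∨ r ∈ ({u, w, x} : Set V)) :
    n ≤ 2 := by
  obtain ⟨⟨hlink, hlen, hQ, hR⟩, hends⟩ := hM
  refine (hlink.card_le_of_forall_meets {q, r} fun j => ?_).trans Finset.card_le_two
  have hu : (M j).first ∈ Q.support ∩ X :=
    ⟨hQ.subset (List.mem_ofFn.mpr ⟨j, rfl⟩), (hends j).1⟩
  have hx : (M j).last ∈ R.support ∩ Y :=
    ⟨hR.subset (List.mem_ofFn.mpr ⟨j, rfl⟩), (hends j).2⟩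
  have hne : (M j).first ≠ (M j).last := hXY.ne_of_mem (hends j).1 (hends j).2
  have hchain : (M j).verts.IsChain G.adj := (M j).chain
  have hnodup := (M j).nodup
  rcases (M j).verts_eq_of_length_le_three (hlen j) hne with hv | ⟨w, hv⟩
  · rw [hv] at hchain
    have := hedge _ hu _ hx (by simpa using hchain)
    simpa [Dpath.support, hv, eq_comm] using this
  · rw [hv] at hchain hnodup
    obtain ⟨huw, hwx⟩ : G.adj (M j).first w ∧ G.adj w (M j).last := by simpa using hchain
    obtain ⟨⟨huw', -⟩, hwx'⟩ :
        ((M j).first ≠ w ∧ (M j).first ≠ (M j).last) ∧ w ≠ (M j).last := by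
      simpa using hnodup
    have hw : w ∈ internalVerts M :=
      hlink.mem_internalVerts (j := j) (by simp [Dpath.support, hv]) huw'.symm hwx'
    have := hpath _ w _ hu hx (hML w hw) huw hwx
    simpa [Dpath.support, hv, eq_comm] using this

/-- Step (1) of the proof of Theorem 3.1: properties of the first vertex `r` of `P i` in
`A ∖ {t i}` (where `A = C ∖ B`) and its predecessor `q` on `P i`. -/
theorem first_crossing_properties {V : Type} {k : ℕ} (G : Dgraph V)
    (sv tv : Fin k → V)
    (L : Fin k → Dpath G) (hL : IsMinimumLinkageFor L sv tv)
    (C : Set V)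
    (B : Set V) (hacc : CAcceptable sv tv L C B)
    (i : Fin k) (m : ℕ) (hm : m < (L i).verts.length)
    (hr : (L i).verts.get ⟨m, hm⟩ ∈ ((C \ B) \ {tv i}))
    (hfirst : ∀ j, ∀ (hj : j < (L i).verts.length), j < m →
      (L i).verts.get ⟨j, hj⟩ ∉ ((C \ B) \ {tv i})) :
    (∀ u ∈ (L i).support ∩ B, ∀ x ∈ (L i).support ∩ (C \ B), G.adj u x →
      u = (L i).verts.get ⟨m - 1, by omega⟩ ∧ x = (L i).verts.get ⟨m, hm⟩) ∧
    (∀ u w x : V, u ∈ (L i).support ∩ B → x ∈ (L i).support ∩ (C \ B) →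
      w ∉ linkSupport L → G.adj u w → G.adj w x →
      (L i).verts.get ⟨m - 1, by omega⟩ ∈ ({u, w, x} : Set V) ∨
        (L i).verts.get ⟨m, hm⟩ ∈ ({u, w, x} : Set V)) ∧
    ¬ ∃ M : Fin 3 → Dpath G,
        IsPlanarMatchingFromTo (L i) (L i) M B (C \ B) ∧ InternallyDisjointFrom M L := by
  obtain ⟨⟨-, hends⟩, hmin⟩ := hL
  have hcross : (L i).CrossesAt B (C \ B) m :=
    hacc.crossesAt hm hr.1 fun j hj hjm => (hends i).2 ▸ hfirst j hj hjm
  have hedge := hmin.eq_of_adj_of_crossesAt hm hcross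
  have hpath := hmin.mem_of_adj_adj_of_crossesAt hm hcross
  refine ⟨hedge, hpath, fun ⟨M, hM, hML⟩ => ?_⟩
  have := hM.card_le_two hML Set.disjoint_sdiff_right
    (fun u hu x hx hux => Or.inl ((hedge u hu x hx hux).1 ▸ Set.mem_insert _ _)) hpath
  omega
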